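/- arXiv:2506.23456 — 5 statements merged into one kernel-verified Lean document; each statement's English description precedes it below -/
import Mathlib

section
/- (Local-to-global entropy for mixtures) Let μ = Σ_{a=1}^k ρ(a)μ_a on Σ^n where each μ_a satisfies approximate tensorization of entropy with constant c*, i.e., Ent_{μ_a}[f] ≤ c*·Σ_{i∈[n]} E_{x∼μ_a}[Ent_{y∼μ_a|_{x_∖i}}[f(y)]] for all f ≥ 0. Then for all f: Σ^n → ℝ_{≥0}: c*·Σ_{i∈[n]} E_{x∼μ}[Ent_{y∼μ|_{x_∖i}}[f(y)]] ≥ E_{a∼ρ}[Ent_{x∼μ_a}[f(x)]]. -/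
open Finset

/-- The single-coordinate conditional distribution `ν|_{x∖i}` of coordinate `i`,
given that the other coordinates agree with `x`. -/
noncomputable def condDist {S : Type*} [Fintype S] [DecidableEq S] {n : ℕ}
    (ν : (Fin n → S) → ℝ) (x : Fin n → S) (i : Fin n) (b : S) : ℝ :=
  ν (Function.update x i b) / ∑ c, ν (Function.update x i c)

/-- Entropy functional `Ent_p[g] = E_p[g log g] − E_p[g] log E_p[g]` on a finite type. -/
noncomputable def entD {T : Type*} [Fintype T] (p g : T → ℝ) : ℝ :=
  (∑ t, p t * (g t * Real.log (g t))) - (∑ t, p t * g t) * Real.log (∑ t, p t * g t)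

/-- The local entropy functional `L_ν[f] = Σ_i E_{x∼ν}[Ent_{ν|_{x∖i}}[f]]`. -/
noncomputable def locEnt {S : Type*} [Fintype S] [DecidableEq S] {n : ℕ}
    (ν : (Fin n → S) → ℝ) (f : (Fin n → S) → ℝ) : ℝ :=
  ∑ i, ∑ x, ν x * entD (condDist ν x i) (fun b => f (Function.update x i b))

/-- Log-sum inequality: `(Σa) log(Σa/Σb) ≤ Σ aᵢ log(aᵢ/bᵢ)` for nonnegative `a, b`
with `bᵢ = 0 → aᵢ = 0`. -/
lemma logSum {ι : Type*} [Fintype ι] (a b : ι → ℝ) (ha : ∀ i, 0 ≤ a i)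
    (hb : ∀ i, 0 ≤ b i) (h0 : ∀ i, b i = 0 → a i = 0) :
    (∑ i, a i) * Real.log ((∑ i, a i) / ∑ i, b i) ≤ ∑ i, a i * Real.log (a i / b i) := by
  by_cases hB : (∑ i, b i) = 0
  · have ha0 : ∀ i, a i = 0 := fun i =>
      h0 i ((Finset.sum_eq_zero_iff_of_nonneg (fun i _ => hb i)).mp hB i (mem_univ i))
    simp [ha0]
  · have hBpos : 0 < ∑ i, b i :=
      lt_of_le_of_ne (Finset.sum_nonneg fun i _ => hb i) (Ne.symm hB)
    have hw1 : ∑ i, b i / (∑ j, b j) = 1 := by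
      rw [← Finset.sum_div]; field_simp
    have key := (Real.convexOn_mul_log).map_sum_le (t := univ)
      (w := fun i => b i / ∑ j, b j) (p := fun i => a i / b i)
      (fun i _ => div_nonneg (hb i) hBpos.le) hw1
      (fun i _ => Set.mem_Ici.mpr (div_nonneg (ha i) (hb i)))
    simp only [smul_eq_mul] at key
    have hsum : ∑ i, (b i / ∑ j, b j) * (a i / b i) = (∑ i, a i) / ∑ j, b j := by
      have step : ∀ i ∈ (univ : Finset ι),
          (b i / ∑ j, b j) * (a i / b i) = a i / ∑ j, b j := by
        intro i _
        rcases eq_or_ne (b i) 0 with h | h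
        · simp [h, h0 i h]
        · field_simp
      rw [Finset.sum_congr rfl step, ← Finset.sum_div]
    rw [hsum] at key
    have key2 : (∑ j, b j) * ((∑ i, a i) / (∑ j, b j) * Real.log ((∑ i, a i) / ∑ j, b j))
        ≤ (∑ j, b j) * ∑ i, (b i / ∑ j, b j) * ((a i / b i) * Real.log (a i / b i)) :=
      mul_le_mul_of_nonneg_left key hBpos.le
    calc (∑ i, a i) * Real.log ((∑ i, a i) / ∑ i, b i)
        = (∑ j, b j) * ((∑ i, a i) / (∑ j, b j) * Real.log ((∑ i, a i) / ∑ j, b j)) := by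
          field_simp
      _ ≤ (∑ j, b j) * ∑ i, (b i / ∑ j, b j) * ((a i / b i) * Real.log (a i / b i)) := key2
      _ = ∑ i, a i * Real.log (a i / b i) := by
          rw [Finset.mul_sum]
          refine Finset.sum_congr rfl fun i _ => ?_
          rcases eq_or_ne (b i) 0 with h | h
          · simp [h, h0 i h]
          · field_simp

/-- Homogeneity of `(M, W) ↦ M log(M/W)`. -/
lemma psi_hom (r M W : ℝ) (hr : 0 ≤ r) :
    r * (M * Real.log (M / W)) = (r * M) * Real.log ((r * M) / (r * W)) := by
  rcases eq_or_lt_of_le hr with h | h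
  · simp [← h]
  · rw [mul_div_mul_left M W (ne_of_gt h)]
    ring

/-- Unnormalized line-entropy formula. -/
lemma entLine {T : Type*} [Fintype T] (q g : T → ℝ) (hq : ∀ t, 0 ≤ q t) :
    (∑ t, q t) * entD (fun t => q t / ∑ s, q s) g
      = (∑ t, q t * (g t * Real.log (g t)))
        - (∑ t, q t * g t) * Real.log ((∑ t, q t * g t) / ∑ t, q t) := by
  by_cases hW : (∑ t, q t) = 0
  · have hq0 : ∀ t, q t = 0 := fun t =>
      (Finset.sum_eq_zero_iff_of_nonneg (fun t _ => hq t)).mp hW t (mem_univ t)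
    simp [entD, hq0, hW]
  · have h1 : ∑ t, q t / (∑ s, q s) * (g t * Real.log (g t))
        = (∑ t, q t * (g t * Real.log (g t))) / ∑ s, q s := by
      simp only [div_mul_eq_mul_div]
      rw [← Finset.sum_div]
    have h2 : ∑ t, q t / (∑ s, q s) * g t = (∑ t, q t * g t) / ∑ s, q s := by
      simp only [div_mul_eq_mul_div]
      rw [← Finset.sum_div]
    unfold entD
    rw [h1, h2]
    field_simp

/-- Exchange a mixture sum with an expectation sum. -/
lemma swap_mix {S : Type*} [Fintype S] {k : ℕ} (ρ : Fin k → ℝ) (q : Fin k → S → ℝ)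
    (h : S → ℝ) :
    ∑ c, (∑ a, ρ a * q a c) * h c = ∑ a, ρ a * ∑ c, q a c * h c := by
  simp only [Finset.sum_mul, Finset.mul_sum]
  rw [Finset.sum_comm]
  exact Finset.sum_congr rfl fun a _ => Finset.sum_congr rfl fun c _ => by ring

lemma swap_mix' {S : Type*} [Fintype S] {k : ℕ} (ρ : Fin k → ℝ) (q : Fin k → S → ℝ) :
    ∑ c, ∑ a, ρ a * q a c = ∑ a, ρ a * ∑ c, q a c := by
  rw [Finset.sum_comm]
  simp only [Finset.mul_sum]

/-- Concavity of the (unnormalized) line entropy under mixtures: the mixture's line entropy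
dominates the mixture of the components' line entropies. -/
lemma mixLine {S : Type*} [Fintype S] {k : ℕ} (ρ : Fin k → ℝ) (hρ0 : ∀ a, 0 ≤ ρ a)
    (q : Fin k → S → ℝ) (hq : ∀ a c, 0 ≤ q a c) (g : S → ℝ) (hg : ∀ c, 0 ≤ g c) :
    ∑ a, ρ a * ((∑ c, q a c) * entD (fun c => q a c / ∑ c', q a c') g)
      ≤ (∑ c, ∑ a, ρ a * q a c)
          * entD (fun c => (∑ a, ρ a * q a c) / ∑ c', ∑ a, ρ a * q a c') g := by
  rw [entLine (fun c => ∑ a, ρ a * q a c) g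
    (fun c => Finset.sum_nonneg fun a _ => mul_nonneg (hρ0 a) (hq a c))]
  rw [Finset.sum_congr rfl fun a (_ : a ∈ univ) => by rw [entLine (q a) g (hq a)]]
  have hA : ∑ c, (∑ a, ρ a * q a c) * (g c * Real.log (g c))
      = ∑ a, ρ a * ∑ c, q a c * (g c * Real.log (g c)) :=
    swap_mix ρ q (fun c => g c * Real.log (g c))
  have hM : ∑ c, (∑ a, ρ a * q a c) * g c = ∑ a, ρ a * ∑ c, q a c * g c :=
    swap_mix ρ q g
  have hW : ∑ c, ∑ a, ρ a * q a c = ∑ a, ρ a * ∑ c, q a c := swap_mix' ρ q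
  rw [hA, hM, hW]
  have expand : ∑ a, ρ a * ((∑ c, q a c * (g c * Real.log (g c)))
        - (∑ c, q a c * g c) * Real.log ((∑ c, q a c * g c) / ∑ c, q a c))
      = (∑ a, ρ a * ∑ c, q a c * (g c * Real.log (g c)))
        - ∑ a, ρ a * ((∑ c, q a c * g c)
            * Real.log ((∑ c, q a c * g c) / ∑ c, q a c)) := by
    rw [← Finset.sum_sub_distrib]
    exact Finset.sum_congr rfl fun a _ => by ring
  rw [expand]
  refine sub_le_sub_left ?_ _
  have hhom : ∑ a, ρ a * ((∑ c, q a c * g c) * Real.log ((∑ c, q a c * g c) / ∑ c, q a c))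
      = ∑ a, (ρ a * ∑ c, q a c * g c)
          * Real.log ((ρ a * ∑ c, q a c * g c) / (ρ a * ∑ c, q a c)) :=
    Finset.sum_congr rfl fun a _ => psi_hom (ρ a) _ _ (hρ0 a)
  rw [hhom]
  refine logSum (fun a => ρ a * ∑ c, q a c * g c) (fun a => ρ a * ∑ c, q a c)
    (fun a => mul_nonneg (hρ0 a) (Finset.sum_nonneg fun c _ => mul_nonneg (hq a c) (hg c)))
    (fun a => mul_nonneg (hρ0 a) (Finset.sum_nonneg fun c _ => hq a c)) ?_
  intro a ha
  have ha' : ρ a * (∑ c, q a c) = 0 := ha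
  show ρ a * (∑ c, q a c * g c) = 0
  rcases mul_eq_zero.mp ha' with h | h
  · rw [h, zero_mul]
  · have hq0 : ∀ c, q a c = 0 := fun c =>
      (Finset.sum_eq_zero_iff_of_nonneg (fun c _ => hq a c)).mp h c (mem_univ c)
    simp [hq0]

/-- Decomposition of the coordinate-`i` part of `locEnt` into lines. -/
lemma locEnt_line {S : Type*} [Fintype S] [DecidableEq S] {n : ℕ}
    (ν : (Fin n → S) → ℝ) (f : (Fin n → S) → ℝ) (i : Fin n) :
    ∑ x, ν x * entD (condDist ν x i) (fun b => f (Function.update x i b))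
      = ∑ y : {j : Fin n // j ≠ i} → S,
          (∑ b, ν ((Equiv.funSplitAt i S).symm (b, y)))
            * entD (fun c => ν ((Equiv.funSplitAt i S).symm (c, y))
                / ∑ c', ν ((Equiv.funSplitAt i S).symm (c', y)))
              (fun c => f ((Equiv.funSplitAt i S).symm (c, y))) := by
  have hupd : ∀ (b c : S) (y : {j : Fin n // j ≠ i} → S),
      Function.update ((Equiv.funSplitAt i S).symm (b, y)) i c
        = (Equiv.funSplitAt i S).symm (c, y) := by
    intro b c y
    funext j
    rcases eq_or_ne j i with rfl | h
    · simp
    · simp [Function.update_apply, h]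
  rw [← Equiv.sum_comp ((Equiv.funSplitAt i S).symm)
    (fun x => ν x * entD (condDist ν x i) (fun b => f (Function.update x i b)))]
  rw [Fintype.sum_prod_type, Finset.sum_comm]
  refine Finset.sum_congr rfl fun y _ => ?_
  have hterm : ∀ b : S,
      (entD (condDist ν ((Equiv.funSplitAt i S).symm (b, y)) i)
          (fun c => f (Function.update ((Equiv.funSplitAt i S).symm (b, y)) i c)))
        = entD (fun c => ν ((Equiv.funSplitAt i S).symm (c, y))
              / ∑ c', ν ((Equiv.funSplitAt i S).symm (c', y)))
            (fun c => f ((Equiv.funSplitAt i S).symm (c, y))) := by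
    intro b
    congr 1
    · funext c
      rw [condDist, hupd]
      congr 1
      exact Finset.sum_congr rfl fun c' _ => by rw [hupd]
    · funext c
      rw [hupd]
  rw [Finset.sum_congr rfl fun b (_ : b ∈ univ) => by rw [hterm b]]
  rw [← Finset.sum_mul]

/-- **Local-to-global entropy for mixtures.** If `μ = Σ_a ρ(a) μ_a` on `Σ^n` where each
component `μ_a` satisfies approximate tensorization of entropy with constant `c*`, then
for every nonnegative `f`, `c* · L_μ[f] ≥ E_{a∼ρ}[Ent_{μ_a}[f]]`. -/
theorem local_to_global_entropy {S : Type*} [Fintype S] [DecidableEq S] {n k : ℕ}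
    (ρ : Fin k → ℝ) (hρ0 : ∀ a, 0 ≤ ρ a) (hρ1 : ∑ a, ρ a = 1)
    (νa : Fin k → (Fin n → S) → ℝ) (hνa0 : ∀ a x, 0 ≤ νa a x) (hνa1 : ∀ a, ∑ x, νa a x = 1)
    (c : ℝ) (hc : 1 ≤ c)
    (hATE : ∀ a, ∀ f : (Fin n → S) → ℝ, (∀ x, 0 ≤ f x) →
      entD (νa a) f ≤ c * locEnt (νa a) f)
    (f : (Fin n → S) → ℝ) (hf : ∀ x, 0 ≤ f x) :
    ∑ a, ρ a * entD (νa a) f ≤ c * locEnt (fun x => ∑ a, ρ a * νa a x) f := by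
  have hc0 : (0 : ℝ) ≤ c := le_trans zero_le_one hc
  have step1 : ∑ a, ρ a * entD (νa a) f ≤ c * ∑ a, ρ a * locEnt (νa a) f := by
    rw [Finset.mul_sum]
    refine Finset.sum_le_sum fun a _ => ?_
    calc ρ a * entD (νa a) f ≤ ρ a * (c * locEnt (νa a) f) :=
          mul_le_mul_of_nonneg_left (hATE a f hf) (hρ0 a)
      _ = c * (ρ a * locEnt (νa a) f) := by ring
  refine le_trans step1 (mul_le_mul_of_nonneg_left ?_ hc0)
  have keyi : ∀ i : Fin n,
      ∑ a, ρ a * ∑ x, νa a x * entD (condDist (νa a) x i) (fun b => f (Function.update x i b))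
        ≤ ∑ x, (∑ a, ρ a * νa a x)
            * entD (condDist (fun x => ∑ a, ρ a * νa a x) x i)
              (fun b => f (Function.update x i b)) := by
    intro i
    rw [locEnt_line (fun x => ∑ a, ρ a * νa a x) f i]
    have hrwa : ∀ a ∈ (univ : Finset (Fin k)),
        ρ a * ∑ x, νa a x * entD (condDist (νa a) x i) (fun b => f (Function.update x i b))
          = ρ a * ∑ y : {j : Fin n // j ≠ i} → S,
              (∑ b, νa a ((Equiv.funSplitAt i S).symm (b, y)))
                * entD (fun c => νa a ((Equiv.funSplitAt i S).symm (c, y))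
                    / ∑ c', νa a ((Equiv.funSplitAt i S).symm (c', y)))
                  (fun c => f ((Equiv.funSplitAt i S).symm (c, y))) :=
      fun a _ => by rw [locEnt_line (νa a) f i]
    rw [Finset.sum_congr rfl hrwa]
    simp only [Finset.mul_sum]
    rw [Finset.sum_comm]
    refine Finset.sum_le_sum fun y _ => ?_
    exact mixLine ρ hρ0 (fun a c' => νa a ((Equiv.funSplitAt i S).symm (c', y)))
      (fun a c' => hνa0 a _) (fun c' => f ((Equiv.funSplitAt i S).symm (c', y)))
      (fun c' => hf _)
  calc ∑ a, ρ a * locEnt (νa a) f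
      = ∑ a, ∑ i, ρ a * ∑ x, νa a x
          * entD (condDist (νa a) x i) (fun b => f (Function.update x i b)) :=
        Finset.sum_congr rfl fun a _ => by rw [locEnt, Finset.mul_sum]
    _ = ∑ i, ∑ a, ρ a * ∑ x, νa a x
          * entD (condDist (νa a) x i) (fun b => f (Function.update x i b)) :=
        Finset.sum_comm
    _ ≤ ∑ i, ∑ x, (∑ a, ρ a * νa a x)
          * entD (condDist (fun x => ∑ a, ρ a * νa a x) x i)
            (fun b => f (Function.update x i b)) :=
        Finset.sum_le_sum fun i _ => keyi i
    _ = locEnt (fun x => ∑ a, ρ a * νa a x) f := rfl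
end

section
/- (Concavity of the Glauber Dirichlet form in the measure) Let μ = Σ_a ρ(a)μ_a be a mixture on Σ^n, P the Glauber dynamics for μ and P_a that for μ_a. Then for every f: Σ^n → ℝ_{≥0} and every increasing Φ', E_P(f, Φ'(f)) ≥ Σ_a ρ(a)·E_{P_a}(f, Φ'(f)). Equivalently, for each pair x ∼ y differing in one coordinate, μ(x)μ(y)/(μ(x)+μ(y)) ≥ Σ_a ρ(a)·μ_a(x)μ_a(y)/(μ_a(x)+μ_a(y)). -/
/-!
The edge weight `h(a, b) = ab/(a + b)` is positively homogeneous and concave on `ℝ≥0²`, hence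
superadditive: `h(a, b) + h(c, d) ≤ h(a + c, b + d)`, which comes down to `(ad - bc)² ≥ 0`.
Pulling the mixture weights inside by homogeneity and summing gives
`Σ_a ρ(a) h(μ_a x, μ_a y) ≤ h(μ x, μ y)` on every edge. Since `f` and `Φ'(f)` vary together,
every edge contributes `(f x - f y)(Φ'(f x) - Φ'(f y)) ≥ 0` to the Dirichlet form, so the
inequality for the forms follows edge by edge.
-/

open Finset

/-- Dirichlet form of the Glauber dynamics for `ν`, written as a sum over (ordered) pairs
`x ∼ y` differing in exactly one coordinate, with edge weight `ν(x)ν(y)/(ν(x)+ν(y))`. -/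
noncomputable def pairDirichlet {S : Type*} [Fintype S] [DecidableEq S] {n : ℕ}
    (ν : (Fin n → S) → ℝ) (f g : (Fin n → S) → ℝ) : ℝ :=
  (n : ℝ)⁻¹ * ∑ x, ∑ y,
    if ({j | x j ≠ y j} : Finset (Fin n)).card = 1 then
      ν x * ν y / (ν x + ν y) * ((f x - f y) * (g x - g y))
    else 0

/-- The parallel sum of resistances (half the harmonic mean); the Glauber edge weight. -/
noncomputable def parallelSum (a b : ℝ) : ℝ := a * b / (a + b)

theorem mul_parallelSum (w a b : ℝ) : w * parallelSum a b = parallelSum (w * a) (w * b) := by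
  rcases eq_or_ne w 0 with rfl | hw
  · simp [parallelSum]
  rw [parallelSum, parallelSum, ← mul_add, mul_mul_mul_comm, mul_assoc,
    mul_div_mul_left _ _ hw, ← mul_div_assoc]

theorem parallelSum_add_le {a b c d : ℝ} (ha : 0 ≤ a) (hb : 0 ≤ b) (hc : 0 ≤ c) (hd : 0 ≤ d) :
    parallelSum a b + parallelSum c d ≤ parallelSum (a + c) (b + d) := by
  unfold parallelSum
  rcases (add_nonneg ha hb).eq_or_lt with hab | hab
  · obtain ⟨rfl, rfl⟩ : a = 0 ∧ b = 0 := ⟨by linarith, by linarith⟩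
    simp
  rcases (add_nonneg hc hd).eq_or_lt with hcd | hcd
  · obtain ⟨rfl, rfl⟩ : c = 0 ∧ d = 0 := ⟨by linarith, by linarith⟩
    simp
  rw [div_add_div _ _ hab.ne' hcd.ne', div_le_div_iff₀ (by positivity) (by linarith)]
  nlinarith [sq_nonneg (a * d - b * c), mul_nonneg ha hd, mul_nonneg hb hc]

theorem sum_parallelSum_le {ι : Type*} (s : Finset ι) {u v : ι → ℝ}
    (hu : ∀ i ∈ s, 0 ≤ u i) (hv : ∀ i ∈ s, 0 ≤ v i) :
    ∑ i ∈ s, parallelSum (u i) (v i) ≤ parallelSum (∑ i ∈ s, u i) (∑ i ∈ s, v i) := by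
  induction s using Finset.cons_induction with
  | empty => simp [parallelSum]
  | cons j s hj ih =>
    simp only [Finset.forall_mem_cons] at hu hv
    rw [sum_cons, sum_cons, sum_cons]
    calc parallelSum (u j) (v j) + ∑ i ∈ s, parallelSum (u i) (v i)
        ≤ parallelSum (u j) (v j) + parallelSum (∑ i ∈ s, u i) (∑ i ∈ s, v i) := by
          gcongr
          exact ih hu.2 hv.2
      _ ≤ _ := parallelSum_add_le hu.1 hv.1 (sum_nonneg hu.2) (sum_nonneg hv.2)

theorem sum_mul_parallelSum_le {ι : Type*} (s : Finset ι) {w u v : ι → ℝ}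
    (hw : ∀ i ∈ s, 0 ≤ w i) (hu : ∀ i ∈ s, 0 ≤ u i) (hv : ∀ i ∈ s, 0 ≤ v i) :
    ∑ i ∈ s, w i * parallelSum (u i) (v i)
      ≤ parallelSum (∑ i ∈ s, w i * u i) (∑ i ∈ s, w i * v i) := by
  simp only [mul_parallelSum]
  exact sum_parallelSum_le s (fun i hi => mul_nonneg (hw i hi) (hu i hi))
    (fun i hi => mul_nonneg (hw i hi) (hv i hi))

theorem sum_mul_pairDirichlet_le_of_monovary {ι S : Type*} [Fintype ι] [Fintype S]
    [DecidableEq S] {n : ℕ} {ρ : ι → ℝ} (hρ : ∀ a, 0 ≤ ρ a) {ν : ι → (Fin n → S) → ℝ}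
    (hν : ∀ a x, 0 ≤ ν a x) {f g : (Fin n → S) → ℝ} (hfg : Monovary f g) :
    ∑ a, ρ a * pairDirichlet (ν a) f g ≤ pairDirichlet (fun x => ∑ a, ρ a * ν a x) f g := by
  have hedge : ∀ x y, 0 ≤ (f x - f y) * (g x - g y) := fun x y =>
    monovary_iff_forall_mul_nonneg.mp hfg y x
  unfold pairDirichlet
  simp only [mul_left_comm (ρ _) (n : ℝ)⁻¹, ← mul_sum]
  gcongr
  conv_lhs => simp only [mul_sum]
  rw [sum_comm]
  gcongr with x _
  rw [sum_comm]
  gcongr with y _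
  split_ifs
  · simp only [← mul_assoc (ρ _), ← sum_mul]
    exact mul_le_mul_of_nonneg_right
      (sum_mul_parallelSum_le univ (fun a _ => hρ a) (fun a _ => hν a x) (fun a _ => hν a y))
      (hedge x y)
  · simp

theorem glauber_dirichlet_concave_general {S : Type*} [Fintype S] [DecidableEq S] {n k : ℕ}
    (ρ : Fin k → ℝ) (hρ0 : ∀ a, 0 ≤ ρ a)
    (νa : Fin k → (Fin n → S) → ℝ) (hνa0 : ∀ a x, 0 ≤ νa a x)
    (dΦ : ℝ → ℝ) (hdΦmono : Monotone dΦ)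
    (f : (Fin n → S) → ℝ) :
    (∑ a, ρ a * pairDirichlet (νa a) f (fun x => dΦ (f x)))
      ≤ pairDirichlet (fun x => ∑ a, ρ a * νa a x) f (fun x => dΦ (f x))
    ∧ ∀ x y : Fin n → S, ({j | x j ≠ y j} : Finset (Fin n)).card = 1 →
      ∑ a, ρ a * (νa a x * νa a y / (νa a x + νa a y))
        ≤ (∑ a, ρ a * νa a x) * (∑ a, ρ a * νa a y)
            / ((∑ a, ρ a * νa a x) + (∑ a, ρ a * νa a y)) :=
  ⟨sum_mul_pairDirichlet_le_of_monovary hρ0 hνa0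
      ((monovary_self f).comp_monotone_left hdΦmono).symm,
    fun x y _ => sum_mul_parallelSum_le univ (fun a _ => hρ0 a) (fun a _ => hνa0 a x)
      (fun a _ => hνa0 a y)⟩

/-- **Concavity of the Glauber Dirichlet form in the measure.** Let `μ = Σ_a ρ(a) μ_a` be a
mixture on `Σ^n`. Then for every `f ≥ 0` and every increasing `Φ'`,
`E_P(f, Φ'(f)) ≥ Σ_a ρ(a)·E_{P_a}(f, Φ'(f))`, and for each pair `x ∼ y` differing in one
coordinate, `μ(x)μ(y)/(μ(x)+μ(y)) ≥ Σ_a ρ(a)·μ_a(x)μ_a(y)/(μ_a(x)+μ_a(y))`. -/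
theorem glauber_dirichlet_concave {S : Type*} [Fintype S] [DecidableEq S] {n k : ℕ}
    (ρ : Fin k → ℝ) (hρ0 : ∀ a, 0 ≤ ρ a) (hρ1 : ∑ a, ρ a = 1)
    (νa : Fin k → (Fin n → S) → ℝ) (hνa0 : ∀ a x, 0 ≤ νa a x) (hνa1 : ∀ a, ∑ x, νa a x = 1)
    (dΦ : ℝ → ℝ) (hdΦmono : Monotone dΦ)
    (f : (Fin n → S) → ℝ) (hf : ∀ x, 0 ≤ f x) :
    (∑ a, ρ a * pairDirichlet (νa a) f (fun x => dΦ (f x)))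
      ≤ pairDirichlet (fun x => ∑ a, ρ a * νa a x) f (fun x => dΦ (f x))
    ∧ ∀ x y : Fin n → S, ({j | x j ≠ y j} : Finset (Fin n)).card = 1 →
      ∑ a, ρ a * (νa a x * νa a y / (νa a x + νa a y))
        ≤ (∑ a, ρ a * νa a x) * (∑ a, ρ a * νa a y)
            / ((∑ a, ρ a * νa a x) + (∑ a, ρ a * νa a y)) :=
  glauber_dirichlet_concave_general ρ hρ0 νa hνa0 dΦ hdΦmono f
end

section
/- (MGF bound for empirical posterior KL) Let μ = Σ_{a=1}^k ρ(a)μ_a be a fully supported mixture on a finite set, and let x_1,…,x_m be i.i.d. samples from μ. Let ρ_π̂ = (1/m)Σ_j ρ_{x_j} where ρ_x(a) = ρ(a)μ_a(x)/μ(x). Then for all 0 ≤ λ < m, E[exp(λ·KL(ρ_π̂ || ρ))] ≤ (1/(1−λ/m))^{k−1}, assuming the same MGF bound holds for the empirical distribution of m i.i.d. draws from ρ. -/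
open Finset

/-- KL divergence between two distributions on a finite type. -/
noncomputable def klDiv {T : Type*} [Fintype T] (p q : T → ℝ) : ℝ :=
  ∑ a, p a * Real.log (p a / q a)

/-!
Given the samples `x_j`, the estimator `ρ_π̂` is the mean of the empirical distribution of
independent labels `a_j ∼ ρ_{x_j}`, so convexity of `p ↦ exp (λ · KL(p ‖ ρ))` (Jensen) bounds the
integrand by the expectation over these labels. Bayes' rule `μ(x) ρ_x(a) = ρ(a) μ_a(x)` rewrites
the joint law of `(x_j, a_j)` as `a_j ∼ ρ` i.i.d. with `x_j ∼ μ_{a_j}`; summing out the `x_j`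
leaves exactly the expectation bounded by Agrawal's theorem.
-/

open Real Set

/-- For `r = 0` the junk value `log (t / 0) = 0` makes this the zero function, so `klDiv p q` is
convex on all nonnegative `p`, with no support condition relative to `q`. -/
lemma convexOn_mul_log_div (r : ℝ) : ConvexOn ℝ (Ici 0) fun t : ℝ => t * log (t / r) := by
  rcases eq_or_ne r 0 with rfl | hr
  · simpa using convexOn_const (0 : ℝ) (convex_Ici (0 : ℝ))
  have h : (fun t : ℝ => t * log (t / r)) = fun t => t * log t + -log r * t := by
    funext t
    rcases eq_or_ne t 0 with rfl | ht
    · simp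
    · rw [log_div ht hr]; ring
  rw [h]
  exact convexOn_mul_log.add ((LinearMap.mul ℝ ℝ (-log r)).convexOn (convex_Ici 0))

section KL

variable {T : Type*} [Fintype T]

lemma convexOn_klDiv (q : T → ℝ) :
    ConvexOn ℝ (Ici 0) fun p : T → ℝ => klDiv p q := by
  refine ⟨convex_Ici 0, fun p hp p' hp' a b ha hb hab => ?_⟩
  simp only [klDiv, smul_eq_mul, Finset.mul_sum, ← Finset.sum_add_distrib]
  gcongr with t
  exact (convexOn_mul_log_div (q t)).2 (hp t) (hp' t) ha hb hab

lemma convexOn_exp_mul_klDiv (q : T → ℝ) {l : ℝ} (hl : 0 ≤ l) :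
    ConvexOn ℝ (Ici 0) fun p : T → ℝ => exp (l * klDiv p q) := by
  refine ⟨convex_Ici 0, fun p hp p' hp' a b ha hb hab => ?_⟩
  calc exp (l * klDiv (a • p + b • p') q)
      ≤ exp (a • (l * klDiv p q) + b • (l * klDiv p' q)) := by
        gcongr
        simpa only [smul_eq_mul, mul_add, mul_left_comm l]
          using mul_le_mul_of_nonneg_left ((convexOn_klDiv q).2 hp hp' ha hb hab) hl
    _ ≤ a • exp (l * klDiv p q) + b • exp (l * klDiv p' q) :=
        convexOn_exp.2 (mem_univ _) (mem_univ _) ha hb hab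

end KL

lemma Fintype.sum_pi_prod_mul_apply {ι β R : Type*} [Fintype ι] [DecidableEq ι] [Fintype β]
    [CommSemiring R] (q : ι → β → R) (hq : ∀ j, ∑ b, q j b = 1) (i : ι) (f : β → R) :
    ∑ x : ι → β, (∏ j, q j (x j)) * f (x i) = ∑ b, q i b * f b := by
  set F : ι → β → R := fun j b => q j b * if j = i then f b else 1
  have hF : ∀ x : ι → β, ∏ j, F j (x j) = (∏ j, q j (x j)) * f (x i) := fun x => by
    simp only [F, Finset.prod_mul_distrib, Finset.prod_ite_eq', Finset.mem_univ, if_true]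
  simp_rw [← hF, ← Fintype.prod_sum, F]
  rw [Finset.prod_eq_single i (fun j _ hj => by simp [hj, hq]) (by simp)]
  simp

section Empirical

variable {m : ℕ} {β : Type*} [DecidableEq β]

noncomputable def empiricalDist (as : Fin m → β) (b : β) : ℝ :=
  (m : ℝ)⁻¹ * ∑ j, if as j = b then 1 else 0

lemma empiricalDist_nonneg (as : Fin m → β) :
    0 ≤ empiricalDist as := fun b =>
  mul_nonneg (by positivity) (Finset.sum_nonneg fun _ _ => by split_ifs <;> norm_num)

lemma sum_prod_smul_empiricalDist [Fintype β] (q : Fin m → β → ℝ) (hq : ∀ j, ∑ b, q j b = 1) :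
    ∑ as : Fin m → β, (∏ j, q j (as j)) • empiricalDist as = fun b => (m : ℝ)⁻¹ * ∑ j, q j b := by
  funext b
  simp only [Finset.sum_apply, Pi.smul_apply, smul_eq_mul, empiricalDist, Finset.mul_sum,
    mul_left_comm _ (m : ℝ)⁻¹]
  rw [Finset.sum_comm]
  congr 1 with j
  rw [← Finset.mul_sum, Fintype.sum_pi_prod_mul_apply q hq j fun a => if a = b then 1 else 0]
  simp

lemma ConvexOn.map_mean_le_sum_empiricalDist [Fintype β] {φ : (β → ℝ) → ℝ}
    (hφ : ConvexOn ℝ (Ici 0) φ) (q : Fin m → β → ℝ)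
    (hq0 : ∀ j b, 0 ≤ q j b) (hq1 : ∀ j, ∑ b, q j b = 1) :
    φ (fun b => (m : ℝ)⁻¹ * ∑ j, q j b)
      ≤ ∑ as : Fin m → β, (∏ j, q j (as j)) * φ (empiricalDist as) := by
  have hw1 : ∑ as : Fin m → β, ∏ j, q j (as j) = 1 := by simp [← Fintype.prod_sum, hq1]
  rw [← sum_prod_smul_empiricalDist q hq1]
  exact hφ.map_sum_le (fun as _ => Finset.prod_nonneg fun j _ => hq0 j (as j)) hw1
    fun as _ => empiricalDist_nonneg as

end Empirical

section Bayes

variable {Ω K : Type*} [Fintype K] (ρ : K → ℝ) (ν : K → Ω → ℝ)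

def mixture (x : Ω) : ℝ := ∑ a, ρ a * ν a x

noncomputable def posterior (x : Ω) (a : K) : ℝ := ρ a * ν a x / mixture ρ ν x

variable {ρ ν}

lemma mixture_nonneg (hρ : ∀ a, 0 ≤ ρ a) (hν : ∀ a x, 0 ≤ ν a x) (x : Ω) : 0 ≤ mixture ρ ν x :=
  Finset.sum_nonneg fun a _ => mul_nonneg (hρ a) (hν a x)

lemma posterior_nonneg (hρ : ∀ a, 0 ≤ ρ a) (hν : ∀ a x, 0 ≤ ν a x) (x : Ω) (a : K) :
    0 ≤ posterior ρ ν x a :=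
  div_nonneg (mul_nonneg (hρ a) (hν a x)) (mixture_nonneg hρ hν x)

lemma sum_posterior {x : Ω} (hx : mixture ρ ν x ≠ 0) : ∑ a, posterior ρ ν x a = 1 := by
  simp only [posterior, ← Finset.sum_div]
  exact div_self hx

lemma mixture_mul_posterior {x : Ω} (hx : mixture ρ ν x ≠ 0) (a : K) :
    mixture ρ ν x * posterior ρ ν x a = ρ a * ν a x :=
  mul_div_cancel₀ _ hx

lemma sum_prod_mixture_mul_sum_prod_posterior [Fintype Ω] {ι : Type*} [Fintype ι]
    [DecidableEq ι] (hmix : ∀ x, mixture ρ ν x ≠ 0) (hν1 : ∀ a, ∑ x, ν a x = 1)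
    (g : (ι → K) → ℝ) :
    ∑ xs : ι → Ω, (∏ j, mixture ρ ν (xs j)) *
        ∑ as : ι → K, (∏ j, posterior ρ ν (xs j) (as j)) * g as
      = ∑ as : ι → K, (∏ j, ρ (as j)) * g as := by
  calc _ = ∑ xs : ι → Ω, ∑ as : ι → K, (∏ j, ρ (as j) * ν (as j) (xs j)) * g as := by
        simp_rw [Finset.mul_sum, ← mul_assoc, ← Finset.prod_mul_distrib,
          mixture_mul_posterior (hmix _)]
    _ = ∑ as : ι → K, (∑ xs : ι → Ω, ∏ j, ρ (as j) * ν (as j) (xs j)) * g as := by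
        rw [Finset.sum_comm]
        simp_rw [Finset.sum_mul]
    _ = _ := by
        congr 1 with as
        rw [← Fintype.prod_sum fun j x => ρ (as j) * ν (as j) x]
        simp_rw [← Finset.mul_sum, hν1, mul_one]

end Bayes

theorem mgf_bound_empirical_posterior_general {Ω : Type*} [Fintype Ω] {k m : ℕ}
    (ρ : Fin k → ℝ) (hρ0 : ∀ a, 0 ≤ ρ a)
    (νa : Fin k → Ω → ℝ) (hνa0 : ∀ a x, 0 ≤ νa a x) (hνa1 : ∀ a, ∑ x, νa a x = 1)
    (hsupp : ∀ x, 0 < ∑ a, ρ a * νa a x)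
    (l : ℝ) (hl0 : 0 ≤ l)
    (hAgrawal : ∑ as : Fin m → Fin k, (∏ j, ρ (as j)) *
        Real.exp (l * klDiv (fun a => (m : ℝ)⁻¹ * ∑ j, if as j = a then (1 : ℝ) else 0) ρ)
      ≤ (1 - l / m)⁻¹ ^ (k - 1)) :
    ∑ xs : Fin m → Ω, (∏ j, ∑ a, ρ a * νa a (xs j)) *
        Real.exp (l * klDiv
          (fun a => (m : ℝ)⁻¹ * ∑ j, ρ a * νa a (xs j) / ∑ b, ρ b * νa b (xs j)) ρ)
      ≤ (1 - l / m)⁻¹ ^ (k - 1) := by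
  have hmix : ∀ x, mixture ρ νa x ≠ 0 := fun x => (hsupp x).ne'
  calc ∑ xs : Fin m → Ω, (∏ j, mixture ρ νa (xs j)) *
        exp (l * klDiv (fun a => (m : ℝ)⁻¹ * ∑ j, posterior ρ νa (xs j) a) ρ)
      ≤ ∑ xs : Fin m → Ω, (∏ j, mixture ρ νa (xs j)) * ∑ as : Fin m → Fin k,
          (∏ j, posterior ρ νa (xs j) (as j)) * exp (l * klDiv (empiricalDist as) ρ) := by
        gcongr with xs
        · exact Finset.prod_nonneg fun j _ => mixture_nonneg hρ0 hνa0 (xs j)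
        · exact (convexOn_exp_mul_klDiv ρ hl0).map_mean_le_sum_empiricalDist _
            (fun j => posterior_nonneg hρ0 hνa0 (xs j)) fun j => sum_posterior (hmix (xs j))
    _ = ∑ as : Fin m → Fin k, (∏ j, ρ (as j)) * exp (l * klDiv (empiricalDist as) ρ) :=
        sum_prod_mixture_mul_sum_prod_posterior hmix hνa1 _
    _ ≤ _ := hAgrawal

/-- **MGF bound for the empirical posterior KL divergence.** Let `μ = Σ_a ρ(a) μ_a` be a
fully supported mixture on a finite set `Ω`, and let `x_1,…,x_m` be i.i.d. from `μ`. Let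
`ρ_π̂ = (1/m) Σ_j ρ_{x_j}` with `ρ_x(a) = ρ(a)μ_a(x)/μ(x)`. Assuming Agrawal's MGF bound for
the empirical distribution of `m` i.i.d. draws from `ρ`, for all `0 ≤ λ < m`:
`E[exp(λ·KL(ρ_π̂ ‖ ρ))] ≤ (1/(1−λ/m))^{k−1}`. -/
theorem mgf_bound_empirical_posterior {Ω : Type*} [Fintype Ω] {k m : ℕ}
    (hk : 1 ≤ k) (hm : 0 < m)
    (ρ : Fin k → ℝ) (hρ0 : ∀ a, 0 ≤ ρ a) (hρ1 : ∑ a, ρ a = 1)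
    (νa : Fin k → Ω → ℝ) (hνa0 : ∀ a x, 0 ≤ νa a x) (hνa1 : ∀ a, ∑ x, νa a x = 1)
    (hsupp : ∀ x, 0 < ∑ a, ρ a * νa a x)
    (l : ℝ) (hl0 : 0 ≤ l) (hlm : l < m)
    (hAgrawal : ∑ as : Fin m → Fin k, (∏ j, ρ (as j)) *
        Real.exp (l * klDiv (fun a => (m : ℝ)⁻¹ * ∑ j, if as j = a then (1 : ℝ) else 0) ρ)
      ≤ (1 - l / m)⁻¹ ^ (k - 1)) :
    ∑ xs : Fin m → Ω, (∏ j, ∑ a, ρ a * νa a (xs j)) *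
        Real.exp (l * klDiv
          (fun a => (m : ℝ)⁻¹ * ∑ j, ρ a * νa a (xs j) / ∑ b, ρ b * νa b (xs j)) ρ)
      ≤ (1 - l / m)⁻¹ ^ (k - 1) :=
  mgf_bound_empirical_posterior_general ρ hρ0 νa hνa0 hνa1 hsupp l hl0 hAgrawal
end

section
/- (ATE implies MLSI contraction term bound) Let π, μ be fully supported distributions on Σ^n with μ = Σ_a ρ(a)μ_a where each μ_a satisfies c*-ATE. Define Y as the random variable Ent_{z∼μ|_{x_∖i}}[π|_{x_∖i}(z)/μ|_{x_∖i}(z)] for x ∼ π and i ∈ [n] uniform. If E_{a∼ρ}[Ent_{x∼μ_a}[π(x)/μ(x)]] ≥ ε/2, then E[Y] ≥ ε/(2c*n). -/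
open Finset

/-- Log-sum inequality. -/
lemma my_logsum {k : ℕ} (a b : Fin k → ℝ) (ha : ∀ j, 0 ≤ a j) (hb : ∀ j, 0 ≤ b j)
    (hab : ∀ j, b j = 0 → a j = 0) :
    (∑ j, a j) * Real.log ((∑ j, a j) / (∑ j, b j)) ≤ ∑ j, a j * Real.log (a j / b j) := by
  set A := ∑ j, a j with hA
  set B := ∑ j, b j with hB
  rcases eq_or_lt_of_le (Finset.sum_nonneg (fun j _ => ha j) : (0:ℝ) ≤ A) with h0 | hApos
  · have : ∀ j ∈ Finset.univ, a j = 0 :=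
      fun j _ => le_antisymm (by
        have := Finset.single_le_sum (fun j _ => ha j) (Finset.mem_univ j)
        linarith [h0]) (ha j)
    have hz : ∀ j, a j = 0 := fun j => this j (Finset.mem_univ j)
    have : A = 0 := h0.symm
    simp [this, hz]
  · -- A > 0, so some a j > 0, hence b j > 0, hence B > 0
    have hBpos : 0 < B := by
      by_contra hB0
      push_neg at hB0
      have hB0' : B = 0 := le_antisymm hB0 (Finset.sum_nonneg (fun j _ => hb j))
      have : ∀ j ∈ Finset.univ, b j = 0 := by
        intro j _
        refine le_antisymm ?_ (hb j)
        have := Finset.single_le_sum (fun j _ => hb j) (Finset.mem_univ j)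
        linarith [hB0']
      have : A = 0 := Finset.sum_eq_zero fun j _ => hab j (this j (Finset.mem_univ j))
      linarith
    have key : ∀ j, a j * Real.log (A / B) + (a j - b j * (A / B)) ≤ a j * Real.log (a j / b j) := by
      intro j
      rcases eq_or_lt_of_le (ha j) with haj | haj
      · have hbb : (0:ℝ) ≤ b j * (A / B) := mul_nonneg (hb j) (le_of_lt (by positivity))
        simp [← haj]
        nlinarith [hbb]
      · have hbj : 0 < b j := lt_of_le_of_ne (hb j) (fun h => by
          have := hab j h.symm; linarith)
        have ht : 0 < a j * B / (b j * A) := by positivity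
        have hlog : 1 - (b j * A) / (a j * B) ≤ Real.log (a j * B / (b j * A)) := by
          have := Real.one_sub_inv_le_log_of_pos ht
          rwa [show (a j * B / (b j * A))⁻¹ = (b j * A) / (a j * B) by
            field_simp] at this
        have hsplit : Real.log (a j * B / (b j * A)) = Real.log (a j / b j) - Real.log (A / B) := by
          rw [Real.log_div (by positivity) (by positivity), Real.log_mul (ne_of_gt haj) (ne_of_gt hBpos),
            Real.log_mul (ne_of_gt hbj) (ne_of_gt hApos), Real.log_div (ne_of_gt haj) (ne_of_gt hbj),
            Real.log_div (ne_of_gt hApos) (ne_of_gt hBpos)]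
          ring
        rw [hsplit] at hlog
        have hmul := mul_le_mul_of_nonneg_left hlog (le_of_lt haj)
        have hleft : a j * (1 - (b j * A) / (a j * B)) = a j - b j * (A / B) := by
          field_simp
        nlinarith [hmul, hleft]
    calc A * Real.log (A / B)
        = ∑ j, (a j * Real.log (A / B) + (a j - b j * (A / B))) := by
          rw [Finset.sum_add_distrib, Finset.sum_sub_distrib, ← Finset.sum_mul, ← Finset.sum_mul,
            ← hA, ← hB]
          field_simp
          ring
      _ ≤ ∑ j, a j * Real.log (a j / b j) := Finset.sum_le_sum fun j _ => key j

section part2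
variable {S : Type*} [Fintype S] [DecidableEq S] {n : ℕ}

lemma condDist_update (ν : (Fin n → S) → ℝ) (x : Fin n → S) (i : Fin n) (b : S) :
    condDist ν (Function.update x i b) i = condDist ν x i := by
  funext c
  simp [condDist, Function.update_idem]

lemma sum_update_update (w : (Fin n → S) → ℝ) (x : Fin n → S) (i : Fin n) (b : S) :
    ∑ c, w (Function.update (Function.update x i b) i c) = ∑ c, w (Function.update x i c) := by
  simp [Function.update_idem]

/-- Resummation via the fiber involution `(x, b) ↦ (update x i b, x i)`. -/
lemma resum (i : Fin n) (w u : (Fin n → S) → ℝ)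
    (hW : ∀ x, (∑ b, w (Function.update x i b)) ≠ 0) :
    ∑ x, u x = ∑ x, w x / (∑ b, w (Function.update x i b)) * ∑ b, u (Function.update x i b) := by
  have he : Function.Involutive (fun p : (Fin n → S) × S => (Function.update p.1 i p.2, p.1 i)) := by
    intro p
    simp [Function.update_idem, Function.update_eq_self]
  set F := fun p : (Fin n → S) × S =>
    w p.1 / (∑ b, w (Function.update p.1 i b)) * u (Function.update p.1 i p.2) with hF
  set G := fun p : (Fin n → S) × S =>
    w (Function.update p.1 i p.2) / (∑ b, w (Function.update p.1 i b)) * u p.1 with hG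
  have hswap : ∑ p : (Fin n → S) × S, F p = ∑ p : (Fin n → S) × S, G p := by
    refine Fintype.sum_equiv he.toPerm F G fun p => ?_
    simp only [hF, hG, Function.Involutive.coe_toPerm]
    rw [Function.update_idem, Function.update_eq_self, sum_update_update]
  calc ∑ x, u x = ∑ x : Fin n → S, (∑ b, w (Function.update x i b)) / (∑ b, w (Function.update x i b)) * u x := by
        refine Finset.sum_congr rfl fun x _ => ?_
        rw [div_self (hW x), one_mul]
    _ = ∑ x : Fin n → S, ∑ b, w (Function.update x i b) / (∑ c, w (Function.update x i c)) * u x := by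
        refine Finset.sum_congr rfl fun x _ => ?_
        rw [Finset.sum_div, Finset.sum_mul]
    _ = ∑ p : (Fin n → S) × S, G p := by
        rw [Fintype.sum_prod_type]
    _ = ∑ p : (Fin n → S) × S, F p := hswap.symm
    _ = ∑ x : Fin n → S, w x / (∑ b, w (Function.update x i b)) * ∑ b, u (Function.update x i b) := by
        rw [Fintype.sum_prod_type]
        exact Finset.sum_congr rfl fun x _ => by rw [Finset.mul_sum]

/-- Scaling of `entD` under positive scalar multiplication of `g`. -/
lemma entD_smul {T : Type*} [Fintype T] [Nonempty T] (p g : T → ℝ) (hp : ∀ t, 0 < p t)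
    (hg : ∀ t, 0 < g t) {l : ℝ} (hl : 0 < l) :
    entD p (fun t => l * g t) = l * entD p g := by
  have hM : 0 < ∑ t, p t * g t :=
    Finset.sum_pos (fun t _ => mul_pos (hp t) (hg t)) Finset.univ_nonempty
  have h2 : (∑ t, p t * (l * g t)) = l * ∑ t, p t * g t := by
    rw [Finset.mul_sum]
    exact Finset.sum_congr rfl fun t _ => by ring
  unfold entD
  have h1 : ∀ t, p t * (l * g t * Real.log (l * g t))
      = l * (p t * (g t * Real.log (g t))) + Real.log l * (l * (p t * g t)) := by
    intro t
    rw [Real.log_mul (ne_of_gt hl) (ne_of_gt (hg t))]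
    ring
  rw [Finset.sum_congr rfl (fun t _ => h1 t), Finset.sum_add_distrib, h2,
    Real.log_mul (ne_of_gt hl) (ne_of_gt hM)]
  rw [← Finset.mul_sum, ← Finset.mul_sum, ← Finset.mul_sum]
  ring

/-- Unnormalized entropy identity: `S · Ent_{u/S}[g] = Σ u g log g − A log (A/S)`. -/
lemma ent_unnorm {T : Type*} [Fintype T] (u g : T → ℝ) (hu : ∀ b, 0 ≤ u b) (hg : ∀ b, 0 < g b) :
    (∑ b, u b) * entD (fun b => u b / ∑ c, u c) g
    = (∑ b, u b * (g b * Real.log (g b)))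
      - (∑ b, u b * g b) * Real.log ((∑ b, u b * g b) / (∑ b, u b)) := by
  set s := ∑ b, u b with hs
  rcases eq_or_lt_of_le (Finset.sum_nonneg (fun b _ => hu b) : (0:ℝ) ≤ s) with h0 | hpos
  · have hz : ∀ b, u b = 0 := by
      intro b
      refine le_antisymm ?_ (hu b)
      have := Finset.single_le_sum (fun b _ => hu b) (Finset.mem_univ b)
      linarith [h0]
    have hs0 : s = 0 := h0.symm
    rw [hs0]
    simp [hz, entD]
  · unfold entD
    have e1 : (∑ b, u b / s * (g b * Real.log (g b))) = (∑ b, u b * (g b * Real.log (g b))) / s := by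
      rw [Finset.sum_div]
      exact Finset.sum_congr rfl fun b _ => by ring
    have e2 : (∑ b, u b / s * g b) = (∑ b, u b * g b) / s := by
      rw [Finset.sum_div]
      exact Finset.sum_congr rfl fun b _ => by ring
    rw [e1, e2]
    field_simp
    exact mul_div_cancel_left₀ _ (ne_of_gt hpos)

end part2

/-- Concavity of the unnormalized fiber entropy in the measure. -/
lemma fiber_ineq {T : Type*} [Fintype T] {k : ℕ} (ρ : Fin k → ℝ) (hρ : ∀ a, 0 ≤ ρ a)
    (v : Fin k → T → ℝ) (hv : ∀ a b, 0 ≤ v a b) (g : T → ℝ) (hg : ∀ b, 0 < g b)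
    (V : T → ℝ) (hV : ∀ b, V b = ∑ a, ρ a * v a b) :
    ∑ a, ρ a * ((∑ b, v a b) * entD (fun b => v a b / ∑ c, v a c) g)
      ≤ (∑ b, V b) * entD (fun b => V b / ∑ c, V c) g := by
  have hV0 : ∀ b, 0 ≤ V b := fun b => by
    rw [hV b]; exact Finset.sum_nonneg fun a _ => mul_nonneg (hρ a) (hv a b)
  rw [ent_unnorm V g hV0 hg]
  have hrw : ∀ a, ρ a * ((∑ b, v a b) * entD (fun b => v a b / ∑ c, v a c) g)
      = ρ a * ((∑ b, v a b * (g b * Real.log (g b)))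
        - (∑ b, v a b * g b) * Real.log ((∑ b, v a b * g b) / (∑ b, v a b))) := by
    intro a
    rw [ent_unnorm (v a) g (hv a) hg]
  rw [Finset.sum_congr rfl fun a _ => hrw a]
  -- abbreviations
  set A := fun a => ∑ b, v a b * g b with hA
  set Sv := fun a => ∑ b, v a b with hSv
  have hlin : ∀ q : T → ℝ, ∑ a, ρ a * ∑ b, v a b * q b = ∑ b, V b * q b := by
    intro q
    have : ∀ a, ρ a * ∑ b, v a b * q b = ∑ b, ρ a * v a b * q b := by
      intro a; rw [Finset.mul_sum]; exact Finset.sum_congr rfl fun b _ => by ring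
    rw [Finset.sum_congr rfl fun a _ => this a, Finset.sum_comm]
    refine Finset.sum_congr rfl fun b _ => ?_
    rw [hV b, Finset.sum_mul]
  have hP : ∑ a, ρ a * ∑ b, v a b * (g b * Real.log (g b)) = ∑ b, V b * (g b * Real.log (g b)) :=
    hlin _
  have hAV : ∑ a, ρ a * A a = ∑ b, V b * g b := hlin g
  have hSV : ∑ a, ρ a * Sv a = ∑ b, V b := by
    have := hlin (fun _ => 1)
    simpa using this
  -- the log-sum step
  have habz : ∀ j, ρ j * Sv j = 0 → ρ j * A j = 0 := by
    intro j h
    rcases mul_eq_zero.1 h with h | h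
    · rw [h, zero_mul]
    · have hz : ∀ b, v j b = 0 := by
        intro b
        refine le_antisymm ?_ (hv j b)
        have := Finset.single_le_sum (fun b _ => hv j b) (Finset.mem_univ b)
        simp only [hSv] at h
        linarith [this, h]
      have : A j = 0 := Finset.sum_eq_zero fun b _ => by rw [hz b, zero_mul]
      rw [this, mul_zero]
  have hls := my_logsum (fun j => ρ j * A j) (fun j => ρ j * Sv j)
    (fun j => mul_nonneg (hρ j) (Finset.sum_nonneg fun b _ => mul_nonneg (hv j b) (le_of_lt (hg b))))
    (fun j => mul_nonneg (hρ j) (Finset.sum_nonneg fun b _ => hv j b))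
    habz
  rw [hAV, hSV] at hls
  have hterm : ∀ j, (ρ j * A j) * Real.log ((ρ j * A j) / (ρ j * Sv j))
      = ρ j * (A j * Real.log (A j / Sv j)) := by
    intro j
    rcases eq_or_lt_of_le (hρ j) with h | h
    · rw [← h]; ring_nf
    · rw [mul_div_mul_left (A j) (Sv j) (ne_of_gt h)]; ring
  rw [Finset.sum_congr rfl fun j _ => hterm j] at hls
  have hexp : ∑ a, ρ a * (∑ b, v a b * (g b * Real.log (g b))
      - A a * Real.log (A a / Sv a))
      = (∑ a, ρ a * ∑ b, v a b * (g b * Real.log (g b)))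
        - ∑ a, ρ a * (A a * Real.log (A a / Sv a)) := by
    rw [← Finset.sum_sub_distrib]
    exact Finset.sum_congr rfl fun a _ => by ring
  rw [hexp, hP]
  linarith [hls]

/-- **Lower bound on the expected local statistic.** Let `π, μ` be fully supported
distributions on `Σ^n` with `μ = Σ_a ρ(a) μ_a`, each `μ_a` satisfying `c*`-ATE.
Let `Y = Ent_{z∼μ|_{x∖i}}[π|_{x∖i}(z)/μ|_{x∖i}(z)]` for `x ∼ π`, `i` uniform.
If `E_{a∼ρ}[Ent_{μ_a}[π/μ]] ≥ ε/2` then `E[Y] ≥ ε/(2c*n)`. -/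
theorem expected_local_statistic_lower_bound {S : Type*} [Fintype S] [DecidableEq S]
    {n k : ℕ} (hn : 0 < n)
    (ρ : Fin k → ℝ) (hρ0 : ∀ a, 0 ≤ ρ a) (hρ1 : ∑ a, ρ a = 1)
    (νa : Fin k → (Fin n → S) → ℝ) (hνa0 : ∀ a x, 0 ≤ νa a x) (hνa1 : ∀ a, ∑ x, νa a x = 1)
    (μ : (Fin n → S) → ℝ) (hμ : ∀ x, μ x = ∑ a, ρ a * νa a x) (hμpos : ∀ x, 0 < μ x)
    (π : (Fin n → S) → ℝ) (hπpos : ∀ x, 0 < π x) (hπ1 : ∑ x, π x = 1)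
    (c : ℝ) (hc : 0 < c)
    (hATE : ∀ a, ∀ f : (Fin n → S) → ℝ, (∀ x, 0 ≤ f x) →
      entD (νa a) f ≤ c * locEnt (νa a) f)
    (ε : ℝ)
    (hinter : ε / 2 ≤ ∑ a, ρ a * entD (νa a) (fun x => π x / μ x)) :
    ε / (2 * c * n) ≤ (n : ℝ)⁻¹ * ∑ i, ∑ x, π x *
      entD (condDist μ x i) (fun b => condDist π x i b / condDist μ x i b) := by
  classical
  -- S is nonempty
  have hneS : Nonempty S := by
    by_contra h
    rw [not_nonempty_iff] at h
    haveI : IsEmpty (Fin n → S) := ⟨fun f => h.false (f ⟨0, hn⟩)⟩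
    have : (∑ x : Fin n → S, π x) = 0 := by simp
    rw [hπ1] at this
    exact one_ne_zero this
  set f : (Fin n → S) → ℝ := fun x => π x / μ x with hf
  have hfpos : ∀ x, 0 < f x := fun x => div_pos (hπpos x) (hμpos x)
  have hSμ : ∀ (x : Fin n → S) (i : Fin n), 0 < ∑ b, μ (Function.update x i b) := fun x i =>
    Finset.sum_pos (fun b _ => hμpos _) Finset.univ_nonempty
  have hSπ : ∀ (x : Fin n → S) (i : Fin n), 0 < ∑ b, π (Function.update x i b) := fun x i =>
    Finset.sum_pos (fun b _ => hπpos _) Finset.univ_nonempty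
  have hWμ : ∀ (i : Fin n) (x : Fin n → S), (∑ b, μ (Function.update x i b)) ≠ 0 :=
    fun i x => ne_of_gt (hSμ x i)
  -- Step 1 : conditional flip identity
  have step1 : ∀ i, ∑ x, π x * entD (condDist μ x i)
        (fun b => condDist π x i b / condDist μ x i b)
      = ∑ x, μ x * entD (condDist μ x i) (fun b => f (Function.update x i b)) := by
    intro i
    rw [resum i μ (fun x => π x * entD (condDist μ x i)
        (fun b => condDist π x i b / condDist μ x i b)) (hWμ i)]
    refine Finset.sum_congr rfl fun x _ => ?_
    have hinner : ∀ b, π (Function.update x i b) * entD (condDist μ (Function.update x i b) i)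
        (fun c => condDist π (Function.update x i b) i c / condDist μ (Function.update x i b) i c)
        = π (Function.update x i b) * entD (condDist μ x i)
            (fun c => condDist π x i c / condDist μ x i c) := by
      intro b
      rw [condDist_update, condDist_update]
    rw [Finset.sum_congr rfl fun b _ => hinner b, ← Finset.sum_mul]
    have hq : ∀ cc, 0 < condDist μ x i cc := fun cc => div_pos (hμpos _) (hSμ x i)
    have hfun : (fun cc => condDist π x i cc / condDist μ x i cc)
        = fun cc => ((∑ b, μ (Function.update x i b)) / (∑ b, π (Function.update x i b)))
            * f (Function.update x i cc) := by
      funext cc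
      simp only [condDist, hf]
      have h1 : (∑ b, π (Function.update x i b)) ≠ 0 := ne_of_gt (hSπ x i)
      have h2 : (∑ b, μ (Function.update x i b)) ≠ 0 := hWμ i x
      have h3 : μ (Function.update x i cc) ≠ 0 := ne_of_gt (hμpos _)
      field_simp
    have hsc : entD (condDist μ x i) (fun cc => condDist π x i cc / condDist μ x i cc)
        = ((∑ b, μ (Function.update x i b)) / (∑ b, π (Function.update x i b)))
            * entD (condDist μ x i) (fun cc => f (Function.update x i cc)) := by
      rw [hfun]
      exact entD_smul _ _ hq (fun cc => hfpos _)
        (div_pos (hSμ x i) (hSπ x i))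
    rw [hsc]
    have h1 : (∑ b, μ (Function.update x i b)) ≠ 0 := hWμ i x
    have h2 : (∑ b, π (Function.update x i b)) ≠ 0 := ne_of_gt (hSπ x i)
    field_simp
  -- Step 3 : local entropy of μ dominates the mixture of local entropies
  have step3 : ∀ i, ∑ a, ρ a * ∑ x, νa a x * entD (condDist (νa a) x i)
        (fun b => f (Function.update x i b))
      ≤ ∑ x, μ x * entD (condDist μ x i) (fun b => f (Function.update x i b)) := by
    intro i
    have hre : ∀ a, ∑ x, νa a x * entD (condDist (νa a) x i)
          (fun b => f (Function.update x i b))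
        = ∑ x, μ x / (∑ b, μ (Function.update x i b)) *
            ((∑ b, νa a (Function.update x i b)) * entD (condDist (νa a) x i)
              (fun b => f (Function.update x i b))) := by
      intro a
      rw [resum i μ (fun x => νa a x * entD (condDist (νa a) x i)
          (fun b => f (Function.update x i b))) (hWμ i)]
      refine Finset.sum_congr rfl fun x _ => ?_
      have hfiber : ∀ b, νa a (Function.update x i b) *
            entD (condDist (νa a) (Function.update x i b) i)
              (fun cc => f (Function.update (Function.update x i b) i cc))
          = νa a (Function.update x i b) * entD (condDist (νa a) x i)
              (fun cc => f (Function.update x i cc)) := by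
        intro b
        have hg : (fun cc => f (Function.update (Function.update x i b) i cc))
            = fun cc => f (Function.update x i cc) := by
          funext cc; rw [Function.update_idem]
        rw [condDist_update, hg]
      rw [Finset.sum_congr rfl fun b _ => hfiber b, ← Finset.sum_mul]
    simp only [hre]
    have hswap : ∑ a, ρ a * ∑ x, μ x / (∑ b, μ (Function.update x i b)) *
          ((∑ b, νa a (Function.update x i b)) * entD (condDist (νa a) x i)
            (fun b => f (Function.update x i b)))
        = ∑ x, μ x / (∑ b, μ (Function.update x i b)) *
            ∑ a, ρ a * ((∑ b, νa a (Function.update x i b)) * entD (condDist (νa a) x i)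
              (fun b => f (Function.update x i b))) := by
      simp only [Finset.mul_sum]
      rw [Finset.sum_comm]
      refine Finset.sum_congr rfl fun x _ => Finset.sum_congr rfl fun a _ => by ring
    rw [hswap]
    refine Finset.sum_le_sum fun x _ => ?_
    have hfib := fiber_ineq ρ hρ0 (fun a b => νa a (Function.update x i b))
      (fun a b => hνa0 a _) (fun b => f (Function.update x i b)) (fun b => hfpos _)
      (fun b => μ (Function.update x i b)) (fun b => hμ _)
    have hcd : ∀ a, (fun b => νa a (Function.update x i b) / ∑ cc, νa a (Function.update x i cc))
        = condDist (νa a) x i := fun a => rfl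
    have hcdμ : (fun b => μ (Function.update x i b) / ∑ cc, μ (Function.update x i cc))
        = condDist μ x i := rfl
    rw [hcdμ] at hfib
    simp only [hcd] at hfib
    have hnn : 0 ≤ μ x / (∑ b, μ (Function.update x i b)) :=
      le_of_lt (div_pos (hμpos x) (hSμ x i))
    calc μ x / (∑ b, μ (Function.update x i b)) *
          ∑ a, ρ a * ((∑ b, νa a (Function.update x i b)) * entD (condDist (νa a) x i)
            (fun b => f (Function.update x i b)))
        ≤ μ x / (∑ b, μ (Function.update x i b)) *
            ((∑ b, μ (Function.update x i b)) * entD (condDist μ x i)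
              (fun b => f (Function.update x i b))) := mul_le_mul_of_nonneg_left hfib hnn
      _ = μ x * entD (condDist μ x i) (fun b => f (Function.update x i b)) := by
          rw [← mul_assoc, div_mul_cancel₀ _ (hWμ i x)]
  -- Step 2 and assembly
  have hE1 : ∑ a, ρ a * entD (νa a) f ≤ c * ∑ a, ρ a * locEnt (νa a) f := by
    rw [Finset.mul_sum]
    refine Finset.sum_le_sum fun a _ => ?_
    have h := hATE a f (fun x => le_of_lt (hfpos x))
    calc ρ a * entD (νa a) f ≤ ρ a * (c * locEnt (νa a) f) :=
          mul_le_mul_of_nonneg_left h (hρ0 a)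
      _ = c * (ρ a * locEnt (νa a) f) := by ring
  have hE2 : ∑ a, ρ a * locEnt (νa a) f ≤ locEnt μ f := by
    unfold locEnt
    have hmm : ∀ a : Fin k, ρ a * ∑ i, ∑ x, νa a x * entD (condDist (νa a) x i)
          (fun b => f (Function.update x i b))
        = ∑ i, ρ a * ∑ x, νa a x * entD (condDist (νa a) x i)
            (fun b => f (Function.update x i b)) := fun a => Finset.mul_sum _ _ _
    rw [Finset.sum_congr rfl fun a _ => hmm a, Finset.sum_comm]
    exact Finset.sum_le_sum fun i _ => step3 i
  have hεT : ε / 2 ≤ c * locEnt μ f := by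
    refine le_trans hinter (le_trans hE1 ?_)
    exact mul_le_mul_of_nonneg_left hE2 (le_of_lt hc)
  have hT : ∑ i, ∑ x, π x * entD (condDist μ x i)
        (fun b => condDist π x i b / condDist μ x i b) = locEnt μ f := by
    unfold locEnt
    exact Finset.sum_congr rfl fun i _ => step1 i
  rw [hT]
  have hn' : (0:ℝ) < n := Nat.cast_pos.mpr hn
  have hloc : ε / (2 * c) ≤ locEnt μ f := by
    rw [div_le_iff₀ (by positivity)]
    nlinarith [hεT]
  calc ε / (2 * c * n) = (n:ℝ)⁻¹ * (ε / (2 * c)) := by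
        rw [← div_div, div_eq_mul_inv, mul_comm]
    _ ≤ (n:ℝ)⁻¹ * locEnt μ f := mul_le_mul_of_nonneg_left hloc (by positivity)
end

section
/- (Hellinger vs KL with minimum probability) Let p, q be probability distributions on a finite set D with q(x) ≥ η > 0 for every x ∈ D. Then H²(p||q) ≥ KL(p||q)/log(e²/η), where H²(p||q) = Σ_x (√p(x) − √q(x))² is twice the squared Hellinger distance (equivalently, H²(p,q) = 2(1 − Σ_x √(p(x)q(x)))). -/
open Finset

/-- `sinh w ≤ w * cosh w` for `w ≥ 0`. -/
lemma sinh_le_mul_cosh {w : ℝ} (hw : 0 ≤ w) : Real.sinh w ≤ w * Real.cosh w := by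
  have key : ∀ x : ℝ, HasDerivAt (fun x => x * Real.cosh x - Real.sinh x)
      (x * Real.sinh x) x := by
    intro x
    have h := ((hasDerivAt_id x).mul (Real.hasDerivAt_cosh x)).sub (Real.hasDerivAt_sinh x)
    exact h.congr_deriv (by simp [id_eq, mul_comm])
  have hmono : MonotoneOn (fun x => x * Real.cosh x - Real.sinh x) (Set.Ici (0:ℝ)) := by
    apply monotoneOn_of_deriv_nonneg (convex_Ici 0)
    · exact ((continuous_id.mul Real.continuous_cosh).sub Real.continuous_sinh).continuousOn
    · intro x _
      exact ((key x).differentiableAt).differentiableWithinAt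
    · intro x hx
      rw [interior_Ici, Set.mem_Ioi] at hx
      rw [(key x).deriv]
      exact mul_nonneg hx.le (Real.sinh_nonneg_iff.2 hx.le)
  have h0 := hmono (Set.self_mem_Ici) (Set.mem_Ici.2 hw) hw
  simp at h0
  linarith

/-- For `t ≥ 1`, `2 t log t ≤ t² - 1`. -/
lemma log_bound_ge_one {t : ℝ} (ht : 1 ≤ t) : 2 * t * Real.log t ≤ t ^ 2 - 1 := by
  have ht0 : (0:ℝ) < t := lt_of_lt_of_le one_pos ht
  have h1 : Real.log t ≤ Real.sinh (Real.log t) :=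
    Real.self_le_sinh_iff.2 (Real.log_nonneg ht)
  rw [Real.sinh_log ht0] at h1
  have h2 : 2 * t * Real.log t ≤ 2 * t * ((t - t⁻¹) / 2) := by
    apply mul_le_mul_of_nonneg_left h1 (by linarith)
  calc 2 * t * Real.log t ≤ 2 * t * ((t - t⁻¹) / 2) := h2
    _ = t ^ 2 - 1 := by field_simp

/-- For `0 < t ≤ 1`, `(t+1) log t ≤ 2(t-1)`. -/
lemma log_bound_le_one {t : ℝ} (ht0 : 0 < t) (ht1 : t ≤ 1) :
    (t + 1) * Real.log t ≤ 2 * (t - 1) := by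
  set s := Real.sqrt t with hs
  have hs0 : 0 < s := Real.sqrt_pos.2 ht0
  have hs1 : s ≤ 1 := Real.sqrt_le_one.2 ht1
  have hst : s ^ 2 = t := Real.sq_sqrt ht0.le
  have hlog : Real.log t = 2 * Real.log s := by
    rw [hs, Real.log_sqrt ht0.le]; ring
  -- sinh(-log s) ≤ (-log s) cosh(-log s)
  have hw : 0 ≤ -Real.log s := by
    have := Real.log_nonpos hs0.le hs1
    linarith
  have h := sinh_le_mul_cosh hw
  rw [Real.sinh_neg, Real.cosh_neg, Real.sinh_log hs0, Real.cosh_log hs0] at h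
  -- h : -((s - s⁻¹)/2) ≤ -log s * ((s + s⁻¹)/2)
  have hsinv : s⁻¹ = s⁻¹ := rfl
  have h2 : (s ^ 2 + 1) * Real.log s ≤ s ^ 2 - 1 := by
    have hmul := mul_le_mul_of_nonneg_left h (le_of_lt (mul_pos two_pos hs0))
    have hss : s * s⁻¹ = 1 := mul_inv_cancel₀ hs0.ne'
    nlinarith [hmul]
  calc (t + 1) * Real.log t = 2 * ((s ^ 2 + 1) * Real.log s) := by rw [hlog, ← hst]; ring
    _ ≤ 2 * (s ^ 2 - 1) := by linarith
    _ = 2 * (t - 1) := by rw [hst]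

/-- Core scalar inequality. -/
lemma core_ineq {t C : ℝ} (ht : 0 < t) (hC : 2 ≤ C) (htC : 2 * Real.log t ≤ C - 2) :
    2 * t ^ 2 * Real.log t - t ^ 2 + 1 ≤ C * (t - 1) ^ 2 := by
  set L := Real.log t with hL
  rcases le_or_gt 1 t with h1 | h1
  · have hb := log_bound_ge_one h1
    -- t * (C (t-1)² - (2t²L - t² + 1)) = t (C-2-2L)(t-1)² + (t²-1-2tL)(2t-1) + (t-1)³
    have e1 : 0 ≤ t * ((C - 2 - 2 * L) * (t - 1) ^ 2) :=
      mul_nonneg ht.le (mul_nonneg (by linarith) (sq_nonneg _))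
    have e2 : 0 ≤ (t ^ 2 - 1 - 2 * t * L) * (2 * t - 1) :=
      mul_nonneg (by linarith [hb]) (by linarith)
    have e3 : 0 ≤ (t - 1) ^ 3 := pow_nonneg (by linarith) 3
    nlinarith [e1, e2, e3]
  · have hb := log_bound_le_one ht h1.le
    -- (t+1)(C(t-1)² - (2t²L - t² + 1)) = (t+1)(C-2)(t-1)² + 2t²(2(t-1)-(t+1)L) + (1-t)³
    have e1 : 0 ≤ (t + 1) * ((C - 2) * (t - 1) ^ 2) :=
      mul_nonneg (by linarith) (mul_nonneg (by linarith) (sq_nonneg _))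
    have e2 : 0 ≤ 2 * t ^ 2 * (2 * (t - 1) - (t + 1) * L) :=
      mul_nonneg (by positivity) (by linarith [hb])
    have e3 : 0 ≤ (1 - t) ^ 3 := pow_nonneg (by linarith) 3
    nlinarith [e1, e2, e3]

/-- Pointwise inequality. -/
lemma pointwise_ineq {a b η C : ℝ} (ha : 0 ≤ a) (ha1 : a ≤ 1) (hη : 0 < η) (hη1 : η ≤ 1)
    (hb : η ≤ b) (hC : C = 2 - Real.log η) :
    a * Real.log (a / b) - a + b ≤ C * (Real.sqrt a - Real.sqrt b) ^ 2 := by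
  have hb0 : 0 < b := lt_of_lt_of_le hη hb
  have hC2 : 2 ≤ C := by
    rw [hC]
    have := Real.log_nonpos hη.le hη1
    linarith
  rcases eq_or_lt_of_le ha with h0 | ha'
  · -- a = 0
    rw [← h0]
    have hbsq : Real.sqrt b ^ 2 = b := Real.sq_sqrt hb0.le
    have h1 : C * (Real.sqrt 0 - Real.sqrt b) ^ 2 = C * b := by
      rw [Real.sqrt_zero]
      have e : ((0:ℝ) - Real.sqrt b) ^ 2 = Real.sqrt b ^ 2 := by ring
      rw [e, hbsq]
    have h2 : (0:ℝ) * Real.log (0 / b) - 0 + b = b := by ring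
    rw [h1, h2]
    nlinarith [hb0]
  · set t := Real.sqrt (a / b) with htdef
    have hab : 0 < a / b := div_pos ha' hb0
    have ht0 : 0 < t := Real.sqrt_pos.2 hab
    have ht2 : t ^ 2 = a / b := Real.sq_sqrt hab.le
    have hat : a = t ^ 2 * b := by rw [ht2]; field_simp
    have hsa : Real.sqrt a = t * Real.sqrt b := by
      rw [hat, Real.sqrt_mul (by positivity), Real.sqrt_sq ht0.le]
    have hlog : Real.log (a / b) = 2 * Real.log t := by
      rw [← ht2, Real.log_pow]; push_cast; ring
    have htC : 2 * Real.log t ≤ C - 2 := by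
      have h1 : a / b ≤ 1 / η := by
        rw [div_le_div_iff₀ hb0 hη]
        nlinarith
      have h2 : Real.log (a / b) ≤ Real.log (1 / η) :=
        Real.log_le_log hab h1
      rw [Real.log_div one_ne_zero hη.ne', Real.log_one] at h2
      rw [← hlog, hC]
      linarith
    have hcore := core_ineq ht0 hC2 htC
    have hbsq : Real.sqrt b ^ 2 = b := Real.sq_sqrt hb0.le
    calc a * Real.log (a / b) - a + b
        = b * (2 * t ^ 2 * Real.log t - t ^ 2 + 1) := by
          rw [hlog, hat]; ring
      _ ≤ b * (C * (t - 1) ^ 2) := by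
          apply mul_le_mul_of_nonneg_left hcore hb0.le
      _ = C * (t * Real.sqrt b - Real.sqrt b) ^ 2 := by
          have e : (t * Real.sqrt b - Real.sqrt b) ^ 2 = (t - 1) ^ 2 * Real.sqrt b ^ 2 := by
            ring
          rw [e, hbsq]; ring
      _ = C * (Real.sqrt a - Real.sqrt b) ^ 2 := by rw [hsa]

/-- **Hellinger vs KL with a minimum-probability assumption.** Let `p, q` be probability
distributions on a finite set `D` with `q(x) ≥ η > 0` for all `x`. Then
`H²(p‖q) ≥ KL(p‖q)/log(e²/η)`, where `H²(p‖q) = Σ_x (√p(x) − √q(x))²`. -/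
theorem hellinger_ge_kl_div_log {D : Type*} [Fintype D]
    (p : D → ℝ) (hp0 : ∀ x, 0 ≤ p x) (hp1 : ∑ x, p x = 1)
    (q : D → ℝ) (hq0 : ∀ x, 0 ≤ q x) (hq1 : ∑ x, q x = 1)
    (η : ℝ) (hη : 0 < η) (hqη : ∀ x, η ≤ q x) :
    (∑ x, p x * Real.log (p x / q x)) / Real.log (Real.exp 2 / η)
      ≤ ∑ x, (Real.sqrt (p x) - Real.sqrt (q x)) ^ 2 := by
  have hne : Nonempty D := by
    rcases isEmpty_or_nonempty D with h | h
    · rw [Finset.univ_eq_empty] at hp1; simp at hp1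
    · exact h
  obtain ⟨x0⟩ := hne
  have hη1 : η ≤ 1 := by
    calc η ≤ q x0 := hqη x0
      _ ≤ ∑ x, q x := Finset.single_le_sum (fun i _ => hq0 i) (Finset.mem_univ x0)
      _ = 1 := hq1
  set C := Real.log (Real.exp 2 / η) with hCdef
  have hC : C = 2 - Real.log η := by
    rw [hCdef, Real.log_div (Real.exp_ne_zero 2) hη.ne', Real.log_exp]
  have hC2 : 2 ≤ C := by
    rw [hC]
    have := Real.log_nonpos hη.le hη1
    linarith
  have hCpos : 0 < C := by linarith
  have hpx1 : ∀ x, p x ≤ 1 := by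
    intro x
    calc p x ≤ ∑ y, p y := Finset.single_le_sum (fun i _ => hp0 i) (Finset.mem_univ x)
      _ = 1 := hp1
  have hsum : ∑ x, (p x * Real.log (p x / q x) - p x + q x)
      ≤ ∑ x, C * (Real.sqrt (p x) - Real.sqrt (q x)) ^ 2 := by
    apply Finset.sum_le_sum
    intro x _
    exact pointwise_ineq (hp0 x) (hpx1 x) hη hη1 (hqη x) hC
  have hkl : ∑ x, (p x * Real.log (p x / q x) - p x + q x)
      = ∑ x, p x * Real.log (p x / q x) := by
    rw [Finset.sum_add_distrib, Finset.sum_sub_distrib, hp1, hq1]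
    ring
  rw [div_le_iff₀ hCpos]
  calc ∑ x, p x * Real.log (p x / q x)
      = ∑ x, (p x * Real.log (p x / q x) - p x + q x) := hkl.symm
    _ ≤ ∑ x, C * (Real.sqrt (p x) - Real.sqrt (q x)) ^ 2 := hsum
    _ = (∑ x, (Real.sqrt (p x) - Real.sqrt (q x)) ^ 2) * C := by
        rw [← Finset.mul_sum]; ring
end
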